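/- arXiv:2605.23221 — 4 statements merged into one kernel-verified Lean document; each statement's English description precedes it below -/
import Mathlib

section
/- Let q be a prime power and n ≥ 1. The number of F_{q²}-rational points of a non-degenerate Hermitian variety U_n in P^n, i.e. the projective zero set of x_0^{q+1} + x_1^{q+1} + ... + x_n^{q+1}, equals (q^n - (-1)^n)(q^{n+1} - (-1)^{n+1})/(q² - 1). -/
/-!
Write `N_m(c)` (`powSumCount K (q + 1) m c`) for the number of `x ∈ K^m` with
`∑ xᵢ^(q+1) = c`. Scaling `x` by `t ∈ Kˣ` shows `N_m(t^(q+1) c) = N_m(c)`, and the norms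
`t^(q+1)` are exactly the `(q-1)`-st roots of unity (`Kˣ` is cyclic of order `(q+1)(q-1)`),
i.e. the nonzero elements of `F_q = {c | c^q = c}`. Hence `N_m` is constant, `= T_m`, on `F_qˣ`;
it vanishes off `F_q` because `x ↦ x^q` is a field automorphism fixing every norm. Splitting
off the first coordinate, resp. counting all of `K^m` by the value of the form, gives
`N_{m+1}(0) = N_m(0) + (q²-1) T_m` and `q^(2m) = N_m(0) + (q-1) T_m`, whence
`q N_m(0) = q^(2m) + (-1)^m (q-1) q^m`. Finally `N_{n+1}(0) = 1 + (q²-1) |U_n|`.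
-/

open Finset
open scoped LinearAlgebra.Projectivization

theorem Projectivization.card_subtype_ne_zero_and {k V : Type*} [Field k] [AddCommGroup V]
    [Module k V] (p : V → Prop) (hp : ∀ (a : kˣ) (v : V), p (a • v) ↔ p v) :
    Nat.card {v : V // v ≠ 0 ∧ p v} = Nat.card {x : ℙ k V // p x.rep} * Nat.card kˣ := by
  let e := (Equiv.subtypeSubtypeEquivSubtypeInter (· ≠ (0 : V)) p).symm.trans
    (Equiv.subtypeEquiv (nonZeroEquivProjectivizationProdUnits k V)
      (q := fun y : ℙ k V × kˣ => p y.1.rep) fun v => ?_)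
  · rw [Nat.card_congr
        (e.trans (Equiv.prodSubtypeFstEquivSubtypeProd (p := fun x : ℙ k V => p x.rep))),
      Nat.card_prod]
  · obtain ⟨a, ha⟩ := exists_smul_eq_mk_rep k v.1 v.2
    change p v.1 ↔ p (mk k v.1 v.2).rep
    rw [← ha, hp]

theorem Projectivization.card_subtype_eq_mul_add_one {k V : Type*} [Field k] [AddCommGroup V]
    [Module k V] [Finite V] (p : V → Prop) (hp : ∀ (a : kˣ) (v : V), p (a • v) ↔ p v)
    (h0 : p 0) :
    Nat.card {v : V // p v} = Nat.card {x : ℙ k V // p x.rep} * Nat.card kˣ + 1 := by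
  classical
  have := Fintype.ofFinite V
  rw [← card_subtype_ne_zero_and p hp]
  simp only [Nat.card_eq_fintype_card, Fintype.card_subtype]
  rw [← card_erase_add_one (mem_filter.2 ⟨mem_univ _, h0⟩)]
  congr 2
  ext v
  simp

theorem IsCyclic.range_powMonoidHom_eq_ker {G : Type*} [CommGroup G] [IsCyclic G] [Finite G]
    {a b : ℕ} (h : Nat.card G = a * b) :
    (powMonoidHom a : G →* G).range = (powMonoidHom b).ker := by
  have ha : a ≠ 0 := by rintro rfl; exact Nat.card_pos.ne' (by simpa using h)
  refine Subgroup.eq_of_le_of_card_ge ?_ ?_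
  · rintro _ ⟨g, rfl⟩
    simp [← pow_mul, ← h, pow_card_eq_one']
  · rw [card_powMonoidHom_range, card_powMonoidHom_ker, h, Nat.gcd_mul_left_left,
      Nat.gcd_mul_right_left, Nat.mul_div_cancel_left _ (Nat.pos_of_ne_zero ha)]

theorem exists_ringHom_eq_pow_of_card_eq_pow {K : Type*} [Field K] [Fintype K] {q k : ℕ}
    (hq : IsPrimePow q) (hK : Fintype.card K = q ^ k) :
    ∃ φ : K →+* K, ∀ x, φ x = x ^ q := by
  obtain ⟨p, j, hp, -, rfl⟩ := hq
  have := Fact.mk hp.nat_prime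
  have := charP_of_card_eq_prime_pow (R := K) (p := p) (f := j * k) (by rw [hK, pow_mul])
  exact ⟨iterateFrobenius K p j, iterateFrobenius_def p j⟩

theorem Fintype.sum_eq_add_sum_units {G₀ M : Type*} [GroupWithZero G₀] [Fintype G₀]
    [DecidableEq G₀] [AddCommMonoid M] (f : G₀ → M) : ∑ c, f c = f 0 + ∑ u : G₀ˣ, f u := by
  rw [Fintype.sum_eq_add_sum_subtype_ne f 0, ← Equiv.sum_comp unitsEquivNeZero]
  rfl

section PowSumCount

variable (R : Type*) [CommRing R] (e : ℕ)

noncomputable def powSumCount (m : ℕ) (c : R) : ℕ :=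
  Nat.card {x : Fin m → R // ∑ i, x i ^ e = c}

variable {R}

theorem powSumCount_zero [DecidableEq R] (c : R) :
    powSumCount R e 0 c = if c = 0 then 1 else 0 := by
  split_ifs with hc <;> simp [powSumCount, hc, eq_comm]

theorem powSumCount_succ [Fintype R] (m : ℕ) (c : R) :
    powSumCount R e (m + 1) c = ∑ y : R, powSumCount R e m (c - y ^ e) := by
  let split : {x : Fin (m + 1) → R // ∑ i, x i ^ e = c} ≃
      Σ y : R, {z : Fin m → R // ∑ i, z i ^ e = c - y ^ e} :=
    ((Fin.consEquiv fun _ => R).symm.subtypeEquiv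
      (q := fun yz : R × (Fin m → R) => ∑ i, yz.2 i ^ e = c - yz.1 ^ e) fun x => by
        rw [Fin.sum_univ_succ, eq_sub_iff_add_eq']; rfl).trans
    (Equiv.subtypeProdEquivSigmaSubtype fun (y : R) (z : Fin m → R) => ∑ i, z i ^ e = c - y ^ e)
  rw [powSumCount, Nat.card_congr split, Nat.card_sigma]
  rfl

theorem powSumCount_units_pow_mul (m : ℕ) (u : Rˣ) (c : R) :
    powSumCount R e m ((u : R) ^ e * c) = powSumCount R e m c := by
  refine Nat.card_congr ((MulAction.toPerm u).subtypeEquiv fun x => ?_).symm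
  simp [Units.smul_def, mul_pow, ← Finset.mul_sum, ← Units.val_pow_eq_pow_val]

theorem sum_powSumCount [Fintype R] (m : ℕ) :
    ∑ c : R, powSumCount R e m c = Fintype.card R ^ m := by
  simp only [powSumCount]
  rw [← Nat.card_sigma, Nat.card_congr (Equiv.sigmaFiberEquiv _), Nat.card_eq_fintype_card,
    Fintype.card_fun, Fintype.card_fin]

end PowSumCount

section Hermitian

variable {K : Type*} [Field K] [Fintype K] {q : ℕ}

theorem pow_succ_pow_self (hK : Fintype.card K = q ^ 2) (x : K) :
    (x ^ (q + 1)) ^ q = x ^ (q + 1) := by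
  rw [← pow_mul, show (q + 1) * q = q ^ 2 + q by ring, pow_add, ← hK, FiniteField.pow_card,
    ← pow_succ']

theorem powSumCount_eq_zero_of_pow_ne (hq : IsPrimePow q) (hK : Fintype.card K = q ^ 2)
    (m : ℕ) {c : K} (hc : c ^ q ≠ c) : powSumCount K (q + 1) m c = 0 := by
  obtain ⟨φ, hφ⟩ := exists_ringHom_eq_pow_of_card_eq_pow hq hK
  refine Nat.card_eq_zero.mpr (.inl ⟨fun ⟨x, hx⟩ => hc ?_⟩)
  rw [← hx, ← hφ, map_sum]
  simp only [hφ, pow_succ_pow_self hK]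

theorem neg_one_pow_sub_one_of_card_eq_pow {k : ℕ} (hq : IsPrimePow q)
    (hK : Fintype.card K = q ^ k) : (-1 : K) ^ (q - 1) = 1 := by
  obtain ⟨φ, hφ⟩ := exists_ringHom_eq_pow_of_card_eq_pow hq hK
  have h : (-1 : K) ^ (q - 1) * -1 = -1 := by
    rw [pow_sub_one_mul hq.ne_zero, ← hφ, map_neg, map_one]
  simpa using h

theorem card_units_of_card_eq_sq (hK : Fintype.card K = q ^ 2) :
    Nat.card Kˣ = (q + 1) * (q - 1) := by
  rw [Nat.card_units, Nat.card_eq_fintype_card, hK, ← Nat.sq_sub_sq, one_pow]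

theorem powSumCount_eq_of_pow_sub_one_eq_one (hK : Fintype.card K = q ^ 2) (m : ℕ) {u : Kˣ}
    (hu : u ^ (q - 1) = 1) : powSumCount K (q + 1) m u = powSumCount K (q + 1) m 1 := by
  obtain ⟨t, rfl⟩ : u ∈ (powMonoidHom (q + 1)).range := by
    rw [IsCyclic.range_powMonoidHom_eq_ker (card_units_of_card_eq_sq hK)]
    exact hu
  simpa using powSumCount_units_pow_mul (q + 1) m t 1

theorem powSumCount_succ_zero (hq : IsPrimePow q) (hK : Fintype.card K = q ^ 2) (m : ℕ) :
    powSumCount K (q + 1) (m + 1) 0 =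
      powSumCount K (q + 1) m 0 + (q ^ 2 - 1) * powSumCount K (q + 1) m 1 := by
  classical
  have hnorm (u : Kˣ) :
      powSumCount K (q + 1) m (-(u : K) ^ (q + 1)) = powSumCount K (q + 1) m 1 := by
    have hu : (-(u ^ (q + 1))) ^ (q - 1) = 1 := by
      rw [neg_pow, ← pow_mul, ← card_units_of_card_eq_sq hK, pow_card_eq_one', mul_one]
      exact Units.ext (by push_cast; exact neg_one_pow_sub_one_of_card_eq_pow hq hK)
    simpa using powSumCount_eq_of_pow_sub_one_eq_one hK m hu
  rw [powSumCount_succ, Fintype.sum_eq_add_sum_units]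
  simp only [zero_sub, hnorm, zero_pow q.succ_ne_zero, neg_zero, sum_const, card_univ,
    smul_eq_mul, Fintype.card_units, hK]

theorem powSumCount_zero_add_sub_one_mul (hq : IsPrimePow q) (hK : Fintype.card K = q ^ 2)
    (m : ℕ) :
    powSumCount K (q + 1) m 0 + (q - 1) * powSumCount K (q + 1) m 1 = q ^ (2 * m) := by
  classical
  have hunit (u : Kˣ) : powSumCount K (q + 1) m u =
      if u ∈ (powMonoidHom (q - 1)).ker then powSumCount K (q + 1) m 1 else 0 := by
    split_ifs with hu
    · exact powSumCount_eq_of_pow_sub_one_eq_one hK m hu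
    · refine powSumCount_eq_zero_of_pow_ne hq hK m fun h => hu ?_
      have h' : (u : K) ^ (q - 1) * u = 1 * u := by rw [pow_sub_one_mul hq.ne_zero, h, one_mul]
      simpa [Units.ext_iff] using mul_right_cancel₀ u.ne_zero h'
  have hker : #{u : Kˣ | u ∈ (powMonoidHom (q - 1)).ker} = q - 1 := by
    rw [← Fintype.card_subtype, ← Nat.card_eq_fintype_card, IsCyclic.card_powMonoidHom_ker,
      card_units_of_card_eq_sq hK, Nat.gcd_mul_left_left]
  rw [pow_mul, ← hK, ← sum_powSumCount, Fintype.sum_eq_add_sum_units,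
    Fintype.sum_congr _ _ hunit, sum_ite, sum_const_zero, add_zero, sum_const, hker, smul_eq_mul]

theorem mul_powSumCount_zero (hq : IsPrimePow q) (hK : Fintype.card K = q ^ 2) (m : ℕ) :
    (q : ℤ) * powSumCount K (q + 1) m 0 = q ^ (2 * m) + (-1) ^ m * (q - 1) * q ^ m := by
  induction m with
  | zero => classical simp [powSumCount_zero]
  | succ m ih =>
    have hstep := powSumCount_succ_zero hq hK m
    have htotal := powSumCount_zero_add_sub_one_mul hq hK m
    have hq1 : 1 ≤ q := hq.one_lt.le
    zify [hq1, Nat.one_le_pow 2 q (by omega)] at hstep htotal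
    linear_combination (q : ℤ) * hstep + q * (q + 1) * htotal - q * ih

end Hermitian

theorem stmt0_general (q n : ℕ) (hq : IsPrimePow q)
    (K : Type) [Field K] [Fintype K] (hK : Fintype.card K = q ^ 2) :
    (Nat.card {x : Projectivization K (Fin (n + 1) → K) //
        ∑ i : Fin (n + 1), x.rep i ^ (q + 1) = 0} : ℚ) =
      ((q : ℚ) ^ n - (-1) ^ n) * ((q : ℚ) ^ (n + 1) - (-1) ^ (n + 1)) / ((q : ℚ) ^ 2 - 1) := by
  have hproj := Projectivization.card_subtype_eq_mul_add_one (k := K)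
    (fun v : Fin (n + 1) → K => ∑ i, v i ^ (q + 1) = 0)
    (fun a v => by simp [Units.smul_def, mul_pow, ← mul_sum]) (by simp)
  have hcount := congrArg (Int.cast : ℤ → ℚ) (mul_powSumCount_zero hq hK (n + 1))
  rw [powSumCount, hproj, card_units_of_card_eq_sq hK] at hcount
  have hq1 : 1 ≤ q := hq.one_lt.le
  have hq2 : (2 : ℚ) ≤ q := by exact_mod_cast hq.two_le
  push_cast [hq1] at hcount
  rw [eq_div_iff (by nlinarith)]
  refine mul_left_cancel₀ (by positivity : (q : ℚ) ≠ 0) ?_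
  have hsign : ((-1 : ℚ) ^ n) ^ 2 = 1 := by rw [← pow_mul, pow_mul', neg_one_sq, one_pow]
  linear_combination hcount + (q : ℚ) * hsign

/-- The number of rational points of the non-degenerate Hermitian variety
`U_n = V(x_0^{q+1} + ... + x_n^{q+1}) ⊆ ℙ^n(F_{q²})`. -/
theorem stmt0 (q n : ℕ) (hq : IsPrimePow q) (hn : 1 ≤ n)
    (K : Type) [Field K] [Fintype K] (hK : Fintype.card K = q ^ 2) :
    (Nat.card {x : Projectivization K (Fin (n + 1) → K) //
        ∑ i : Fin (n + 1), x.rep i ^ (q + 1) = 0} : ℚ) =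
      ((q : ℚ) ^ n - (-1) ^ n) * ((q : ℚ) ^ (n + 1) - (-1) ^ (n + 1)) / ((q : ℚ) ^ 2 - 1) :=
  stmt0_general q n hq K hK
end

section
/- Let q be a prime power and let ℓ be a line in P^n(F_{q²}) and U_n the non-degenerate Hermitian variety in P^n. Then the number of F_{q²}-rational points of ℓ ∩ U_n is either 1, q+1, or q²+1 (the last case meaning ℓ ⊆ U_n). -/
/-!
Over `K = 𝔽_{q²}` the map `x ↦ x ^ q` is the conjugation of `K / 𝔽_q`, so `x ^ (q + 1)` is the norm
`N x` and `H v = ∑ vᵢ ^ (q + 1)` is a Hermitian form. If `H` vanishes on the whole line, all its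
`q² + 1` points count. Otherwise take an anisotropic point `[e]` of the line; the other points are
`[t • e + f]`, `t ∈ K`, and `H (t • e + f) = c N t + b t + b ^ q t ^ q + a` with `c ≠ 0` and
`a, c ∈ 𝔽_q`. Completing the norm turns this into `N (t + β) = D` with `D ∈ 𝔽_q`, and since
`N : Kˣ → 𝔽_qˣ` is onto with kernel of order `q + 1`, this has `1` or `q + 1` solutions.
-/

section PowerMaps

variable {K : Type*} [Field K] {q : ℕ}

theorem add_pow_of_isPrimePow_dvd_card [Fintype K] (hq : IsPrimePow q)
    (hqK : q ∣ Fintype.card K) (x y : K) : (x + y) ^ q = x ^ q + y ^ q := by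
  obtain ⟨p, k, hp, hk, rfl⟩ := hq
  obtain ⟨r, hr, n, hrp, hcard⟩ := FiniteField.card' K
  have hpr : p = r := (Nat.prime_dvd_prime_iff_eq hp.nat_prime hrp).1 <|
    hp.nat_prime.dvd_of_dvd_pow (n := n) <| hcard ▸ (dvd_pow_self p hk.ne').trans hqK
  subst hpr
  have : Fact p.Prime := ⟨hp.nat_prime⟩
  exact add_pow_char_pow x y p k

theorem pow_pow_eq_self_of_card_eq_sq [Fintype K] (hK : Fintype.card K = q ^ 2) (x : K) :
    (x ^ q) ^ q = x := by
  rw [← pow_mul, ← sq, ← hK, FiniteField.pow_card]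

theorem pow_succ_pow_eq_self_of_card_eq_sq [Fintype K] (hK : Fintype.card K = q ^ 2) (x : K) :
    (x ^ (q + 1)) ^ q = x ^ (q + 1) := by
  rw [pow_succ, mul_pow, pow_pow_eq_self_of_card_eq_sq hK, mul_comm]

theorem one_lt_of_card_eq_sq [Fintype K] (hK : Fintype.card K = q ^ 2) : 1 < q := by
  have : 1 < q ^ 2 := hK ▸ Fintype.one_lt_card
  by_contra! h
  interval_cases q <;> simp at this

def powRingHom (hadd : ∀ x y : K, (x + y) ^ q = x ^ q + y ^ q) : K →+* K :=
  RingHom.mk' (powMonoidHom q) hadd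

@[simp]
theorem powRingHom_apply (hadd : ∀ x y : K, (x + y) ^ q = x ^ q + y ^ q) (x : K) :
    powRingHom hadd x = x ^ q :=
  rfl

theorem card_pow_succ_eq_of_pow_eq_self [Fintype K] (hK : Fintype.card K = q ^ 2) {d : K}
    (hd0 : d ≠ 0) (hd : d ^ q = d) : Nat.card {s : K // s ^ (q + 1) = d} = q + 1 := by
  have hq := one_lt_of_card_eq_sq hK
  have hunits : Nat.card Kˣ = (q + 1) * (q - 1) := by
    rw [Nat.card_units, Nat.card_eq_fintype_card, hK, ← Nat.sq_sub_sq, one_pow]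
  let φ : Kˣ →* Kˣ := powMonoidHom (q + 1)
  have hker : Nat.card φ.ker = q + 1 := by
    rw [IsCyclic.card_powMonoidHom_ker, hunits, Nat.gcd_eq_right (dvd_mul_right _ _)]
  have hrange : φ.range = rootsOfUnity (q - 1) K := by
    have : NeZero (q - 1) := ⟨by omega⟩
    refine Subgroup.eq_of_le_of_card_ge ?_ ?_
    · rintro _ ⟨u, rfl⟩
      rw [mem_rootsOfUnity, powMonoidHom_apply, ← pow_mul, ← hunits]
      exact pow_card_eq_one'
    · rw [IsCyclic.card_powMonoidHom_range, hunits, Nat.gcd_eq_right (dvd_mul_right _ _),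
        Nat.mul_div_cancel_left _ (by omega)]
      exact card_rootsOfUnity K (q - 1)
  obtain ⟨s₀, hs₀⟩ : Units.mk0 d hd0 ∈ φ.range := by
    rw [hrange, mem_rootsOfUnity]
    ext
    rw [Units.val_pow_eq_pow_val, Units.val_mk0, Units.val_one, ← mul_left_inj' hd0, one_mul,
      ← pow_succ, Nat.sub_add_cancel hq.le, hd]
  let fiber : {s : K // s ^ (q + 1) = d} ≃ φ ⁻¹' {φ s₀} :=
    { toFun s := ⟨Units.mk0 s.1 fun h => hd0 (by simp [← s.2, h]), by
        ext; simp [φ, hs₀, s.2]⟩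
      invFun u := ⟨u.1, by simpa [φ, hs₀, Units.ext_iff] using u.2⟩
      left_inv _ := rfl
      right_inv _ := Subtype.ext (Units.ext rfl) }
  rw [Nat.card_congr (fiber.trans (φ.fiberEquivKer s₀)), hker]

theorem card_hermitian_affine_mem [Fintype K] (hK : Fintype.card K = q ^ 2)
    (hadd : ∀ x y : K, (x + y) ^ q = x ^ q + y ^ q) {a b c : K} (hc : c ≠ 0) (hcq : c ^ q = c)
    (haq : a ^ q = a) :
    Nat.card {t : K // c * t ^ (q + 1) + b * t + b ^ q * t ^ q + a = 0} ∈ ({1, q + 1} : Set ℕ) := by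
  obtain ⟨β, hβ⟩ : ∃ β, c * β = b ^ q := ⟨b ^ q / c, mul_div_cancel₀ _ hc⟩
  have hβq : c * β ^ q = b := by
    rw [← hcq, ← mul_pow, hβ, pow_pow_eq_self_of_card_eq_sq hK]
  obtain ⟨D, hD⟩ : ∃ D, c * D = c * β ^ (q + 1) - a := ⟨β ^ (q + 1) - a / c, by field_simp⟩
  have hDq : D ^ q = D := by
    have := congrArg (powRingHom hadd) hD
    simp only [map_sub, map_mul, powRingHom_apply, hcq, haq,
      pow_succ_pow_eq_self_of_card_eq_sq hK] at this
    rw [← hD] at this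
    exact mul_left_cancel₀ hc this
  have hcomplete (t : K) :
      c * t ^ (q + 1) + b * t + b ^ q * t ^ q + a = c * ((t + β) ^ (q + 1) - D) := by
    rw [pow_succ (t + β), hadd]
    linear_combination -(t ^ q * hβ) - t * hβq + hD
  have hshift : {t : K // c * t ^ (q + 1) + b * t + b ^ q * t ^ q + a = 0} ≃
      {s : K // s ^ (q + 1) = D} :=
    Equiv.subtypeEquiv (Equiv.addRight β) fun t => by
      rw [hcomplete, mul_eq_zero, sub_eq_zero, Equiv.coe_addRight, or_iff_right hc]
  rw [Nat.card_congr hshift]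
  by_cases hD0 : D = 0
  · left
    simp [hD0, pow_eq_zero_iff]
  · right
    exact card_pow_succ_eq_of_pow_eq_self hK hD0 hDq

end PowerMaps

section HermitianForm

variable {K ι : Type*} [Field K] [Fintype ι] {q : ℕ}

def hermitianForm (q : ℕ) (v : ι → K) : K :=
  ∑ i, v i ^ (q + 1)

theorem hermitianForm_smul (a : K) (v : ι → K) :
    hermitianForm q (a • v) = a ^ (q + 1) * hermitianForm q v := by
  simp only [hermitianForm, Pi.smul_apply, smul_eq_mul, mul_pow, Finset.mul_sum]

theorem hermitianForm_units_smul_eq_zero_iff (a : Kˣ) (v : ι → K) :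
    hermitianForm q (a • v) = 0 ↔ hermitianForm q v = 0 := by
  rw [Units.smul_def, hermitianForm_smul, mul_eq_zero, or_iff_right (pow_ne_zero _ a.ne_zero)]

variable [Fintype K]

theorem hermitianForm_pow_eq_self (hK : Fintype.card K = q ^ 2)
    (hadd : ∀ x y : K, (x + y) ^ q = x ^ q + y ^ q) (v : ι → K) :
    hermitianForm q v ^ q = hermitianForm q v := by
  rw [hermitianForm, ← powRingHom_apply hadd, map_sum]
  simp only [powRingHom_apply, pow_succ_pow_eq_self_of_card_eq_sq hK]

theorem hermitianForm_smul_add (hK : Fintype.card K = q ^ 2)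
    (hadd : ∀ x y : K, (x + y) ^ q = x ^ q + y ^ q) (t : K) (e f : ι → K) :
    hermitianForm q (t • e + f) = hermitianForm q e * t ^ (q + 1) + (∑ i, e i * f i ^ q) * t +
      (∑ i, e i * f i ^ q) ^ q * t ^ q + hermitianForm q f := by
  rw [← powRingHom_apply hadd, map_sum]
  simp only [hermitianForm, powRingHom_apply, Finset.sum_mul, ← Finset.sum_add_distrib]
  refine Finset.sum_congr rfl fun i _ => ?_
  rw [Pi.add_apply, Pi.smul_apply, smul_eq_mul, pow_succ (t * e i + f i), hadd, mul_pow, mul_pow,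
    pow_pow_eq_self_of_card_eq_sq hK]
  ring

end HermitianForm

open Module
open scoped LinearAlgebra.Projectivization

theorem Submodule.exists_linearIndependent_pair_span_eq {K V : Type*} [Field K] [AddCommGroup V]
    [Module K V] {W : Submodule K V} (hW : finrank K W = 2) {e : V} (heW : e ∈ W) (he : e ≠ 0) :
    ∃ f, LinearIndependent K ![e, f] ∧ span K (Set.range ![e, f]) = W := by
  have : FiniteDimensional K W := Module.finite_of_finrank_eq_succ hW
  obtain ⟨f, hef⟩ := exists_linearIndependent_pair_of_one_lt_finrank (by omega : 1 < finrank K W)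
    (x := ⟨e, heW⟩) (by simpa using he)
  have hef' : LinearIndependent K ![e, (f : V)] := by
    have h := hef.map' W.subtype W.ker_subtype
    rwa [show W.subtype ∘ ![⟨e, heW⟩, f] = ![e, (f : V)] by ext i; fin_cases i <;> rfl] at h
  refine ⟨f, hef', eq_of_le_of_finrank_eq ?_ ?_⟩
  · rw [span_le, Matrix.range_cons_cons_empty]
    exact Set.insert_subset heW (Set.singleton_subset_iff.2 f.2)
  · rw [finrank_span_eq_card hef', Fintype.card_fin, hW]

namespace Projectivization

variable {K U V : Type*} [Field K] [AddCommGroup U] [Module K U] [AddCommGroup V] [Module K V]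

theorem submodule_le_range_iff (L : U →ₗ[K] V) (hL : Function.Injective L) (x : ℙ K V) :
    x.submodule ≤ LinearMap.range L ↔ x ∈ Set.range (map L hL) := by
  constructor
  · intro hx
    rw [submodule_eq, Submodule.span_singleton_le_iff_mem] at hx
    obtain ⟨u, hu⟩ := hx
    have hu0 : u ≠ 0 := by
      rintro rfl
      exact x.rep_nonzero (by rw [← hu, map_zero])
    exact ⟨mk K u hu0, by simp only [map_mk, hu, mk_rep]⟩
  · rintro ⟨y, rfl⟩
    induction y using ind with | h u hu =>
    rw [map_mk, submodule_mk, Submodule.span_singleton_le_iff_mem]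
    exact LinearMap.mem_range_self L u

theorem card_submodule_le_range_and (L : U →ₗ[K] V) (hL : Function.Injective L)
    (P : ℙ K V → Prop) :
    Nat.card {x : ℙ K V // x.submodule ≤ LinearMap.range L ∧ P x} =
      Nat.card {y : ℙ K U // P (map L hL y)} :=
  (Nat.card_preimage_of_injective (s := {x : ℙ K V | x.submodule ≤ LinearMap.range L ∧ P x})
    (map_injective L hL) fun x hx => (submodule_le_range_iff L hL x).1 hx.1).symm.trans <|
    Nat.card_congr <| Equiv.subtypeEquivRight fun y =>
      and_iff_right ((submodule_le_range_iff L hL _).2 ⟨y, rfl⟩)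

theorem card_submodule_le_of_finrank_eq_two [Finite K] {W : Submodule K V}
    (hW : finrank K W = 2) : Nat.card {x : ℙ K V // x.submodule ≤ W} = Nat.card K + 1 := by
  have h := card_submodule_le_range_and W.subtype W.injective_subtype fun _ => True
  simp only [Submodule.range_subtype, and_true] at h
  rw [h, Nat.card_congr (Equiv.subtypeUnivEquiv fun _ => trivial), card_of_finrank_two K W hW]

theorem rep_mk_iff {Q : V → Prop} (hQ : ∀ (a : Kˣ) v, Q (a • v) ↔ Q v) (v : V) (hv : v ≠ 0) :
    Q (mk K v hv).rep ↔ Q v := by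
  obtain ⟨a, ha⟩ := exists_smul_eq_mk_rep K v hv
  rw [← ha, hQ]

theorem card_submodule_le_span_pair_and {e f : V} (hef : LinearIndependent K ![e, f])
    {Q : V → Prop} (hQ : ∀ (a : Kˣ) v, Q (a • v) ↔ Q v) (he : ¬ Q e) :
    Nat.card {x : ℙ K V // x.submodule ≤ Submodule.span K (Set.range ![e, f]) ∧ Q x.rep} =
      Nat.card {t : K // Q (t • e + f)} := by
  classical
  set L := Fintype.linearCombination K ![e, f]
  have hL : Function.Injective L := hef.fintypeLinearCombination_injective
  have hL_apply (v : Fin 2 → K) : L v = v 0 • e + v 1 • f := by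
    simp [L, Fintype.linearCombination_apply, Fin.sum_univ_two]
  let E := OnePoint.equivProjectivization K
  have hcoe (t : K) : Q (map L hL (E t)).rep ↔ Q (t • e + f) := by
    simp only [E, OnePoint.equivProjectivization_apply_coe, map_mk, rep_mk_iff hQ, hL_apply]
    simp
  have hinfty : ¬ Q (map L hL (E OnePoint.infty)).rep := by
    simpa [E, map_mk, rep_mk_iff hQ, hL_apply] using he
  have hsub : {o | Q (map L hL (E o)).rep} ⊆ Set.range ((↑) : K → OnePoint K) := by
    intro o ho
    induction o using OnePoint.rec with
    | infty => exact absurd ho hinfty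
    | coe t => exact ⟨t, rfl⟩
  rw [← Fintype.range_linearCombination, card_submodule_le_range_and L hL,
    ← Nat.card_congr (E.subtypeEquiv fun _ => Iff.rfl)]
  exact (Nat.card_preimage_of_injective OnePoint.coe_injective hsub).symm.trans
    (Nat.card_congr (Equiv.subtypeEquivRight hcoe))

end Projectivization

open Projectivization in
theorem card_isotropic_points_mem_of_anisotropic {K ι : Type*} [Field K] [Fintype K] [Fintype ι]
    {q : ℕ} (hK : Fintype.card K = q ^ 2) (hadd : ∀ x y : K, (x + y) ^ q = x ^ q + y ^ q)
    {W : Submodule K (ι → K)} (hW : finrank K W = 2) {e : ι → K} (heW : e ∈ W)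
    (he : hermitianForm q e ≠ 0) :
    Nat.card {x : ℙ K (ι → K) // x.submodule ≤ W ∧ hermitianForm q x.rep = 0} ∈
      ({1, q + 1} : Set ℕ) := by
  obtain ⟨f, hef, rfl⟩ :=
    W.exists_linearIndependent_pair_span_eq hW heW (by rintro rfl; simp [hermitianForm] at he)
  rw [card_submodule_le_span_pair_and hef (Q := fun v => hermitianForm q v = 0)
    hermitianForm_units_smul_eq_zero_iff he]
  simp only [hermitianForm_smul_add hK hadd]
  exact card_hermitian_affine_mem hK hadd he (hermitianForm_pow_eq_self hK hadd e)
    (hermitianForm_pow_eq_self hK hadd f)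

theorem stmt3_general (q n : ℕ) (hq : IsPrimePow q)
    (K : Type) [Field K] [Fintype K] (hK : Fintype.card K = q ^ 2)
    (W : Submodule K (Fin (n + 1) → K)) (hW : Module.finrank K W = 2) :
    Nat.card {x : Projectivization K (Fin (n + 1) → K) //
        x.submodule ≤ W ∧ ∑ i : Fin (n + 1), x.rep i ^ (q + 1) = 0}
      ∈ ({1, q + 1, q ^ 2 + 1} : Set ℕ) ∧
    (Nat.card {x : Projectivization K (Fin (n + 1) → K) //
        x.submodule ≤ W ∧ ∑ i : Fin (n + 1), x.rep i ^ (q + 1) = 0} = q ^ 2 + 1 ↔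
      ∀ x : Projectivization K (Fin (n + 1) → K),
        x.submodule ≤ W → ∑ i : Fin (n + 1), x.rep i ^ (q + 1) = 0) := by
  have hadd := add_pow_of_isPrimePow_dvd_card hq (hK ▸ dvd_pow_self q two_ne_zero)
  by_cases hall : ∀ x : ℙ K (Fin (n + 1) → K), x.submodule ≤ W → hermitianForm q x.rep = 0
  · have hcard : Nat.card {x : ℙ K (Fin (n + 1) → K) //
        x.submodule ≤ W ∧ hermitianForm q x.rep = 0} = q ^ 2 + 1 := by
      rw [Nat.card_congr (Equiv.subtypeEquivRight fun x => and_iff_left_of_imp (hall x)),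
        Projectivization.card_submodule_le_of_finrank_eq_two hW, Nat.card_eq_fintype_card, hK]
    exact ⟨hcard ▸ Set.mem_insert_of_mem _ (Set.mem_insert_of_mem _ rfl), iff_of_true hcard hall⟩
  · push Not at hall
    obtain ⟨x, hxW, hx⟩ := hall
    have hrep : x.rep ∈ W := by
      rwa [Projectivization.submodule_eq, Submodule.span_singleton_le_iff_mem] at hxW
    have hmem := card_isotropic_points_mem_of_anisotropic hK hadd hW hrep hx
    have hne : Nat.card {x : ℙ K (Fin (n + 1) → K) //
        x.submodule ≤ W ∧ hermitianForm q x.rep = 0} ≠ q ^ 2 + 1 := by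
      have : q + 1 < q ^ 2 := by nlinarith [hq.two_le]
      rintro h
      simp only [h, Set.mem_insert_iff, Set.mem_singleton_iff] at hmem
      omega
    exact ⟨Set.insert_subset_insert (Set.singleton_subset_iff.2 (Set.mem_insert _ _)) hmem,
      iff_of_false hne fun h => hx (h x hxW)⟩

/-- A line `ℓ` in `ℙ^n(F_{q²})` meets the non-degenerate Hermitian variety `U_n`
in either `1`, `q+1`, or `q²+1` rational points, the last case occurring exactly
when `ℓ ⊆ U_n`. -/
theorem stmt3 (q n : ℕ) (hq : IsPrimePow q) (hn : 1 ≤ n)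
    (K : Type) [Field K] [Fintype K] (hK : Fintype.card K = q ^ 2)
    (W : Submodule K (Fin (n + 1) → K)) (hW : Module.finrank K W = 2) :
    Nat.card {x : Projectivization K (Fin (n + 1) → K) //
        x.submodule ≤ W ∧ ∑ i : Fin (n + 1), x.rep i ^ (q + 1) = 0}
      ∈ ({1, q + 1, q ^ 2 + 1} : Set ℕ) ∧
    (Nat.card {x : Projectivization K (Fin (n + 1) → K) //
        x.submodule ≤ W ∧ ∑ i : Fin (n + 1), x.rep i ^ (q + 1) = 0} = q ^ 2 + 1 ↔
      ∀ x : Projectivization K (Fin (n + 1) → K),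
        x.submodule ≤ W → ∑ i : Fin (n + 1), x.rep i ^ (q + 1) = 0) :=
  stmt3_general q n hq K hK W hW
end

section
/- Let q be a prime power, n ≥ 3, and d ≤ q. Let P ∈ P^n(F_{q²}), let PU_{n-1} be the rank-n Hermitian variety with vertex P, and let V(F) be an F_{q²}-hypersurface of degree d with P ∉ V(F). Then |PU_{n-1} ∩ V(F)(F_{q²})| ≤ d·|U_{n-1}(F_{q²})|. -/
/-!
Projection from the vertex `P = [0 : ⋯ : 0 : 1]` sends a point of the cone other than `P` to a
point `y` of the base `U_{n-1}`; the points over `y` are the points `[y : t]` of the line `Py`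
other than `P`. As `F` is homogeneous of degree `d`, the polynomial `t ↦ F(y, t)` has degree at
most `d` and `t^d`-coefficient `F(P) ≠ 0`, so each of these lines meets `V(F)` in at most `d`
points.
-/

open scoped LinearAlgebra.Projectivization

theorem Nat.card_le_mul_card_of_surjective_sigma {α β : Type*} [Finite β] {E : β → Type*}
    [∀ b, Finite (E b)] {k : ℕ} (f : (Σ b, E b) → α) (hf : Function.Surjective f)
    (hE : ∀ b, Nat.card (E b) ≤ k) : Nat.card α ≤ k * Nat.card β := by
  have := Fintype.ofFinite β
  calc Nat.card α ≤ Nat.card (Σ b, E b) := Nat.card_le_card_of_surjective f hf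
    _ = ∑ b, Nat.card (E b) := Nat.card_sigma
    _ ≤ ∑ _b : β, k := Finset.sum_le_sum fun b _ => hE b
    _ = k * Nat.card β := by simp [mul_comm]

namespace Polynomial

variable {R ι : Type*} [CommSemiring R] {g : ι → R[X]}

theorem natDegree_prod_pow_le_of_natDegree_le_one (s : Finset ι)
    (hg : ∀ i ∈ s, (g i).natDegree ≤ 1) (m : ι → ℕ) :
    (∏ i ∈ s, g i ^ m i).natDegree ≤ ∑ i ∈ s, m i :=
  (natDegree_prod_le _ _).trans <| Finset.sum_le_sum fun i hi =>
    (natDegree_pow_le_of_le _ (hg i hi)).trans_eq (mul_one _)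

theorem coeff_prod_pow_of_natDegree_le_one [DecidableEq ι] (s : Finset ι)
    (hg : ∀ i ∈ s, (g i).natDegree ≤ 1) (m : ι → ℕ) :
    (∏ i ∈ s, g i ^ m i).coeff (∑ i ∈ s, m i) = ∏ i ∈ s, (g i).coeff 1 ^ m i := by
  induction s using Finset.induction_on with
  | empty => simp
  | insert a s ha ih =>
    have hga := hg a (Finset.mem_insert_self a s)
    have hgs : ∀ i ∈ s, (g i).natDegree ≤ 1 := fun i hi => hg i (Finset.mem_insert_of_mem hi)
    rw [Finset.prod_insert ha, Finset.sum_insert ha, Finset.prod_insert ha,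
      coeff_mul_add_eq_of_natDegree_le ((natDegree_pow_le_of_le _ hga).trans_eq (mul_one _))
        (natDegree_prod_pow_le_of_natDegree_le_one s hgs m),
      ih hgs, ← coeff_pow_of_natDegree_le hga, mul_one]

end Polynomial

namespace MvPolynomial.IsHomogeneous

variable {σ R : Type*} {d : ℕ}

section CommSemiring

variable [CommSemiring R] {F : MvPolynomial σ R}

theorem eval_smul (hF : F.IsHomogeneous d) (c : R) (x : σ → R) :
    eval (c • x) F = c ^ d * eval x F := by
  rw [eval_eq, eval_eq, Finset.mul_sum]
  refine Finset.sum_congr rfl fun α hα => ?_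
  simp only [Pi.smul_apply, smul_eq_mul, mul_pow, Finset.prod_mul_distrib,
    Finset.prod_pow_eq_pow_sum, ← hF.degree_eq_sum_deg_support hα]
  ring

theorem natDegree_aeval_le (hF : F.IsHomogeneous d) {g : σ → Polynomial R}
    (hg : ∀ i, (g i).natDegree ≤ 1) : (MvPolynomial.aeval g F).natDegree ≤ d := by
  rw [aeval_eq_eval₂Hom, coe_eval₂Hom, eval₂_eq]
  refine Polynomial.natDegree_sum_le_of_forall_le _ _ fun α hα => ?_
  refine (Polynomial.natDegree_C_mul_le _ _).trans ?_
  rw [hF.degree_eq_sum_deg_support hα]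
  exact Polynomial.natDegree_prod_pow_le_of_natDegree_le_one _ (fun i _ => hg i) _

theorem coeff_aeval (hF : F.IsHomogeneous d) {g : σ → Polynomial R}
    (hg : ∀ i, (g i).natDegree ≤ 1) :
    (MvPolynomial.aeval g F).coeff d = eval (fun i => (g i).coeff 1) F := by
  classical
  rw [aeval_eq_eval₂Hom, coe_eval₂Hom, eval₂_eq, eval_eq, Polynomial.finsetSum_coeff]
  refine Finset.sum_congr rfl fun α hα => ?_
  rw [Polynomial.algebraMap_eq, Polynomial.coeff_C_mul, hF.degree_eq_sum_deg_support hα,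
    Polynomial.coeff_prod_pow_of_natDegree_le_one _ (fun i _ => hg i)]

end CommSemiring

theorem card_eval_add_smul_eq_zero_le [CommRing R] [IsDomain R] {F : MvPolynomial σ R}
    (hF : F.IsHomogeneous d) {v : σ → R} (hv : eval v F ≠ 0) (u : σ → R) :
    Nat.card {t : R // eval (u + t • v) F = 0} ≤ d := by
  set p := MvPolynomial.aeval (fun i => Polynomial.C (v i) * Polynomial.X + Polynomial.C (u i)) F
  have hlin (i : σ) : (Polynomial.C (v i) * Polynomial.X + Polynomial.C (u i)).natDegree ≤ 1 :=
    Polynomial.natDegree_linear_le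
  have hcoeff : p.coeff d = eval v F := by simpa using hF.coeff_aeval hlin
  have hp : p ≠ 0 := fun h => hv (by rw [← hcoeff, h, Polynomial.coeff_zero])
  have heval (t : R) : p.eval t = eval (u + t • v) F := by
    rw [← Polynomial.coe_aeval_eq_eval, ← AlgHom.comp_apply, MvPolynomial.comp_aeval,
      MvPolynomial.aeval_eq_eval]
    congr 2 with i
    simp only [Polynomial.coe_aeval_eq_eval, Polynomial.eval_add, Polynomial.eval_mul,
      Polynomial.eval_C, Polynomial.eval_X, Pi.add_apply, Pi.smul_apply, smul_eq_mul]
    ring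
  calc Nat.card {t : R // eval (u + t • v) F = 0} = (p.rootSet R).ncard := by
        rw [← Nat.card_coe_set_eq]
        exact Nat.card_congr <| Equiv.subtypeEquivRight fun t => by
          rw [Polynomial.mem_rootSet, Polynomial.coe_aeval_eq_eval, heval]
          exact (and_iff_right hp).symm
    _ ≤ p.natDegree := Polynomial.ncard_rootSet_le p R
    _ ≤ d := hF.natDegree_aeval_le hlin

end MvPolynomial.IsHomogeneous

theorem Projectivization.rep_mk_eq_zero_iff {K V : Type*} [Field K] [AddCommGroup V]
    [Module K V] {φ : V → K} {k : ℕ} (hφ : ∀ (c : K) v, φ (c • v) = c ^ k * φ v) {v : V}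
    (hv : v ≠ 0) : φ (mk K v hv).rep = 0 ↔ φ v = 0 := by
  obtain ⟨a, ha⟩ := exists_smul_eq_mk_rep K v hv
  rw [← ha, Units.smul_def, hφ, mul_eq_zero_iff_left (pow_ne_zero k a.ne_zero)]

open Projectivization

section Cone

variable {K : Type*} [Field K] {n d : ℕ} {F : MvPolynomial (Fin (n + 1)) K}

theorem Fin.snoc_eq_snoc_zero_add_smul_single (w : Fin n → K) (t : K) :
    Fin.snoc w t = Fin.snoc w 0 + t • Pi.single (Fin.last n) (1 : K) := by
  ext i
  refine Fin.lastCases ?_ (fun j => ?_) i <;> simp [Fin.castSucc_ne_last]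

theorem card_eval_snoc_eq_zero_le (hF : F.IsHomogeneous d)
    (hP : MvPolynomial.eval (Pi.single (Fin.last n) 1) F ≠ 0) (w : Fin n → K) :
    Nat.card {t : K // MvPolynomial.eval (Fin.snoc w t) F = 0} ≤ d := by
  have := hF.card_eval_add_smul_eq_zero_le hP (Fin.snoc w 0)
  simpa only [← Fin.snoc_eq_snoc_zero_add_smul_single] using this

theorem init_ne_zero_of_eval_eq_zero (hF : F.IsHomogeneous d)
    (hP : MvPolynomial.eval (Pi.single (Fin.last n) 1) F ≠ 0) {v : Fin (n + 1) → K}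
    (hv : v ≠ 0) (hFv : MvPolynomial.eval v F = 0) : Fin.init v ≠ 0 := by
  intro h0
  have hvP : v = v (Fin.last n) • Pi.single (Fin.last n) 1 := by
    ext i
    refine Fin.lastCases (by simp) (fun j => ?_) i
    rw [Pi.smul_apply, Pi.single_eq_of_ne (Fin.castSucc_ne_last j), smul_zero]
    exact congrFun h0 j
  have hlast : v (Fin.last n) ≠ 0 := fun h => hv (by rw [hvP, h, zero_smul])
  rw [hvP, hF.eval_smul] at hFv
  exact mul_ne_zero (pow_ne_zero d hlast) hP hFv

theorem card_cone_inter_le [Finite K] {φ : (Fin n → K) → K} {k : ℕ}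
    (hφ : ∀ (c : K) w, φ (c • w) = c ^ k * φ w) (hF : F.IsHomogeneous d)
    (hP : MvPolynomial.eval (Pi.single (Fin.last n) 1) F ≠ 0) :
    Nat.card {x : ℙ K (Fin (n + 1) → K) //
        φ (Fin.init x.rep) = 0 ∧ MvPolynomial.eval x.rep F = 0}
      ≤ d * Nat.card {y : ℙ K (Fin n → K) // φ y.rep = 0} := by
  have hsnoc (w : Fin n → K) (hw : w ≠ 0) (t : K) : (Fin.snoc w t : Fin (n + 1) → K) ≠ 0 :=
    fun h => hw (funext fun i => by simpa using congrFun h i.castSucc)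
  let pointOnLine : (Σ y : {y : ℙ K (Fin n → K) // φ y.rep = 0},
      {t : K // MvPolynomial.eval (Fin.snoc y.1.rep t) F = 0}) →
      {x : ℙ K (Fin (n + 1) → K) //
        φ (Fin.init x.rep) = 0 ∧ MvPolynomial.eval x.rep F = 0} :=
    fun ⟨y, t⟩ =>
      have hv := hsnoc _ y.1.rep_nonzero t
      ⟨mk K (Fin.snoc y.1.rep t) hv,
        (rep_mk_eq_zero_iff (φ := fun v => φ (Fin.init v)) (fun c v => hφ c (Fin.init v)) hv).2
          (by simp only [Fin.init_snoc]; exact y.2),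
        (rep_mk_eq_zero_iff (φ := fun v => MvPolynomial.eval v F) hF.eval_smul hv).2 t.2⟩
  have hsurj : Function.Surjective pointOnLine := by
    rintro ⟨x, hxφ, hxF⟩
    have hinit := init_ne_zero_of_eval_eq_zero hF hP x.rep_nonzero hxF
    obtain ⟨a, ha⟩ := exists_smul_eq_mk_rep K _ hinit
    have hrep : Fin.snoc (mk K _ hinit).rep (a * x.rep (Fin.last n)) = (a : K) • x.rep := by
      rw [← ha]
      ext i
      refine Fin.lastCases ?_ (fun j => ?_) i <;> simp [Fin.init, Units.smul_def]
    refine ⟨⟨⟨mk K _ hinit, (rep_mk_eq_zero_iff hφ hinit).2 hxφ⟩,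
      ⟨a * x.rep (Fin.last n), by rw [hrep, hF.eval_smul, hxF, mul_zero]⟩⟩, ?_⟩
    exact Subtype.ext <| ((mk_eq_mk_iff K _ _ _ x.rep_nonzero).2 ⟨a, hrep.symm⟩).trans x.mk_rep
  exact Nat.card_le_mul_card_of_surjective_sigma pointOnLine hsurj fun y =>
    card_eval_snoc_eq_zero_le hF hP y.1.rep

end Cone

theorem stmt8_general (q n d : ℕ)
    (K : Type) [Field K] [Fintype K]
    (F : MvPolynomial (Fin (n + 1)) K) (hFd : F.IsHomogeneous d)
    (hP : MvPolynomial.eval (Pi.single (Fin.last n) (1 : K)) F ≠ 0) :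
    Nat.card {x : Projectivization K (Fin (n + 1) → K) //
        (∑ i : Fin (n + 1), (if (i : ℕ) < n then x.rep i ^ (q + 1) else 0)) = 0 ∧
        MvPolynomial.eval x.rep F = 0}
      ≤ d * Nat.card {y : Projectivization K (Fin n → K) //
          ∑ i : Fin n, y.rep i ^ (q + 1) = 0} := by
  have hcone (v : Fin (n + 1) → K) :
      (∑ i : Fin (n + 1), if (i : ℕ) < n then v i ^ (q + 1) else 0) =
        ∑ j, Fin.init v j ^ (q + 1) := by
    simp [Fin.sum_univ_castSucc, Fin.init]
  simp only [hcone]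
  exact card_cone_inter_le (φ := fun w => ∑ i, w i ^ (q + 1)) (k := q + 1)
    (fun c w => by simp [mul_pow, Finset.mul_sum]) hFd hP

/-- If the vertex `P = [0:...:0:1]` of the rank-`n` Hermitian cone
`PU_{n-1} = V(x_0^{q+1}+...+x_{n-1}^{q+1}) ⊆ ℙ^n(F_{q²})` does not lie on the
degree-`d` hypersurface `V(F)` (`d ≤ q`), then
`|PU_{n-1} ∩ V(F)(F_{q²})| ≤ d·|U_{n-1}(F_{q²})|`. -/
theorem stmt8 (q n d : ℕ) (hq : IsPrimePow q) (hn : 3 ≤ n) (hd : 1 ≤ d) (hdq : d ≤ q)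
    (K : Type) [Field K] [Fintype K] (hK : Fintype.card K = q ^ 2)
    (F : MvPolynomial (Fin (n + 1)) K) (hF : F ≠ 0) (hFd : F.IsHomogeneous d)
    (hP : MvPolynomial.eval (Pi.single (Fin.last n) (1 : K)) F ≠ 0) :
    Nat.card {x : Projectivization K (Fin (n + 1) → K) //
        (∑ i : Fin (n + 1), (if (i : ℕ) < n then x.rep i ^ (q + 1) else 0)) = 0 ∧
        MvPolynomial.eval x.rep F = 0}
      ≤ d * Nat.card {y : Projectivization K (Fin n → K) //
          ∑ i : Fin n, y.rep i ^ (q + 1) = 0} :=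
  stmt8_general q n d K F hFd hP
end

section
/- Let q be a prime power, n ≥ 4. Then |PU_{n-1}(F_{q²})| − (q^{2n-1} + (q^{2n-2}−1)/(q²−1)) = q^{n+1}(q^{n-3} + (−1)^n)/(q+1) > 0, where |PU_{n-1}(F_{q²})| = 1 + q²(q^{n-1}−(−1)^{n-1})(q^n−(−1)^n)/(q²−1). -/
/-- For `n ≥ 4`:
`|PU_{n-1}(F_{q²})| − (q^{2n-1} + (q^{2n-2}−1)/(q²−1)) = q^{n+1}(q^{n-3}+(−1)^n)/(q+1) > 0`,
where `|PU_{n-1}(F_{q²})| = 1 + q²(q^{n-1}−(−1)^{n-1})(q^n−(−1)^n)/(q²−1)`. -/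
theorem stmt17 (q n : ℕ) (hq : IsPrimePow q) (hn : 4 ≤ n) :
    ((1 + (q : ℚ) ^ 2 * (((q : ℚ) ^ (n - 1) - (-1) ^ (n - 1)) * ((q : ℚ) ^ n - (-1) ^ n) /
          ((q : ℚ) ^ 2 - 1)))
        - ((q : ℚ) ^ (2 * n - 1) + ((q : ℚ) ^ (2 * n - 2) - 1) / ((q : ℚ) ^ 2 - 1))
      = (q : ℚ) ^ (n + 1) * ((q : ℚ) ^ (n - 3) + (-1) ^ n) / ((q : ℚ) + 1)) ∧
    0 < (q : ℚ) ^ (n + 1) * ((q : ℚ) ^ (n - 3) + (-1) ^ n) / ((q : ℚ) + 1) := by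
  have hq2 : 2 ≤ q := hq.two_le
  have hQ : (2 : ℚ) ≤ (q : ℚ) := by exact_mod_cast hq2
  obtain ⟨m, rfl⟩ : ∃ m, n = m + 4 := ⟨n - 4, by omega⟩
  have e1 : m + 4 - 1 = m + 3 := by omega
  have e2 : m + 4 - 3 = m + 1 := by omega
  have e3 : 2 * (m + 4) - 1 = 2 * m + 7 := by omega
  have e4 : 2 * (m + 4) - 2 = 2 * m + 6 := by omega
  rw [e1, e2, e3, e4]
  have hd1 : ((q : ℚ) ^ 2 - 1) ≠ 0 := by nlinarith
  have hd2 : ((q : ℚ) + 1) ≠ 0 := by nlinarith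
  constructor
  · rcases Nat.even_or_odd m with hm | hm
    · have h1 : (-1 : ℚ) ^ (m + 3) = -1 := (hm.add_odd (by decide)).neg_one_pow
      have h2 : (-1 : ℚ) ^ (m + 4) = 1 := (hm.add (by decide)).neg_one_pow
      rw [h1, h2]
      field_simp
      ring
    · have h1 : (-1 : ℚ) ^ (m + 3) = 1 := (hm.add_odd (by decide)).neg_one_pow
      have h2 : (-1 : ℚ) ^ (m + 4) = -1 := (hm.add_even (by decide)).neg_one_pow
      rw [h1, h2]
      field_simp
      ring
  · have h1 : (q : ℚ) ≤ (q : ℚ) ^ (m + 1) := le_self_pow₀ (by linarith) (by omega)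
    have h2 : (-1 : ℚ) ≤ (-1 : ℚ) ^ (m + 4) := by
      rcases Nat.even_or_odd (m + 4) with h | h
      · rw [h.neg_one_pow]; norm_num
      · rw [h.neg_one_pow]
    have : (0 : ℚ) < (q : ℚ) ^ (m + 1) + (-1) ^ (m + 4) := by linarith
    positivity
end
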